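/- Let ρ(x) = (4π)^(-n/2)·exp(-|x|²/4) on ℝⁿ. For every smooth compactly supported function u : ℝⁿ → ℝ, one has ∫ u² |x|² ρ dx ≤ 4 ∫ (n·u² + 4·|∇u|²) ρ dx. -/

import Mathlib

open MeasureTheory Real

namespace Stmt3Aux

variable {n : ℕ}

noncomputable def w (x : EuclideanSpace ℝ (Fin n)) : ℝ :=
  (4 * Real.pi) ^ (-(n:ℝ)/2) * Real.exp (-‖x‖^2/4)

lemma w_pos (x : EuclideanSpace ℝ (Fin n)) : 0 < w x :=
  mul_pos (Real.rpow_pos_of_pos (by positivity) _) (Real.exp_pos _)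

lemma w_continuous : Continuous (w (n := n)) :=
  continuous_const.mul (Real.continuous_exp.comp
    (((continuous_norm.pow 2).neg).div_const 4))

lemma w_hasFDerivAt (x : EuclideanSpace ℝ (Fin n)) :
    HasFDerivAt w ((-(w x)/2) • (innerSL ℝ x : EuclideanSpace ℝ (Fin n) →L[ℝ] ℝ)) x := by
  have h1 : HasFDerivAt (fun y : EuclideanSpace ℝ (Fin n) => ‖y‖^2)
      (2 • (innerSL ℝ x).comp (ContinuousLinearMap.id ℝ _)) x :=
    (hasFDerivAt_id x).norm_sq
  have h2 : HasFDerivAt (fun y : EuclideanSpace ℝ (Fin n) => -‖y‖^2/4)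
      ((-(1/4) : ℝ) • (2 • (innerSL ℝ x).comp (ContinuousLinearMap.id ℝ _))) x := by
    have heq : (fun y : EuclideanSpace ℝ (Fin n) => -‖y‖^2/4)
        = fun y : EuclideanSpace ℝ (Fin n) => ((1:ℝ)/4) • (-‖y‖^2) := by
      funext y; simp [smul_eq_mul]; ring
    rw [heq]
    have := (h1.neg).const_smul (R := ℝ) ((1:ℝ)/4)
    refine HasFDerivAt.congr_fderiv this ?_
    ext y
    simp
  have h3 := h2.exp
  have h4 := h3.const_mul ((4 * Real.pi) ^ (-(n:ℝ)/2))
  refine HasFDerivAt.congr_fderiv h4 ?_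
  ext y
  simp [w]
  ring

variable {u : EuclideanSpace ℝ (Fin n) → ℝ}

lemma integrable_mul_u (hu : ContDiff ℝ (⊤ : ℕ∞) u) (hsupp : HasCompactSupport u)
    {q : EuclideanSpace ℝ (Fin n) → ℝ} (hq : Continuous q) :
    Integrable (fun x => u x * q x) :=
  (hu.continuous.mul hq).integrable_of_hasCompactSupport hsupp.mul_right

lemma ibp (hu : ContDiff ℝ (⊤ : ℕ∞) u) (hsupp : HasCompactSupport u) (i : Fin n) :
    ∫ x, (u x)^2 * (x i)^2 * w x
      = 2 * ∫ x, ((u x)^2 + 2 * u x * fderiv ℝ u x (EuclideanSpace.single i 1) * x i) * w x := by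
  classical
  set v : EuclideanSpace ℝ (Fin n) := EuclideanSpace.single i 1 with hv
  have hud : Differentiable ℝ u := hu.differentiable (by simp)
  have hF : ∀ x : EuclideanSpace ℝ (Fin n),
      HasFDerivAt (fun y : EuclideanSpace ℝ (Fin n) => (u y)^2 * y i)
        ((u x * u x) • (EuclideanSpace.proj (𝕜 := ℝ) i)
          + (x i) • (u x • fderiv ℝ u x + u x • fderiv ℝ u x)) x := by
    intro x
    have h := ((hud x).hasFDerivAt.mul (hud x).hasFDerivAt).mul
      (EuclideanSpace.proj (𝕜 := ℝ) i).hasFDerivAt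
    simp only [pow_two]
    exact h
  have hFd : Differentiable ℝ (fun y : EuclideanSpace ℝ (Fin n) => (u y)^2 * y i) :=
    fun x => (hF x).differentiableAt
  have hWd : Differentiable ℝ (w (n := n)) := fun x => (w_hasFDerivAt x).differentiableAt
  have hwv : ∀ x : EuclideanSpace ℝ (Fin n), fderiv ℝ w x v = -(w x)/2 * x i := by
    intro x
    rw [(w_hasFDerivAt x).fderiv]
    simp [hv, real_inner_comm, EuclideanSpace.inner_single_right]
  have hfv : ∀ x : EuclideanSpace ℝ (Fin n),
      fderiv ℝ (fun y : EuclideanSpace ℝ (Fin n) => (u y)^2 * y i) x v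
        = (u x)^2 + 2 * u x * fderiv ℝ u x v * x i := by
    intro x
    rw [(hF x).fderiv]
    simp [hv, EuclideanSpace.single_apply]
    ring
  -- continuity facts
  have hcoord : Continuous (fun x : EuclideanSpace ℝ (Fin n) => x i) :=
    (EuclideanSpace.proj (𝕜 := ℝ) i).continuous
  have cw : Continuous (w (n := n)) := w_continuous
  have hDu : Continuous (fun x => fderiv ℝ u x v) :=
    (hu.continuous_fderiv (by simp)).clm_apply continuous_const
  -- integrability
  have I3 : Integrable (fun x => (fun y : EuclideanSpace ℝ (Fin n) => (u y)^2 * y i) x * w x) := by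
    refine (integrable_mul_u hu hsupp
      (hu.continuous.mul (hcoord.mul cw))).congr ?_
    exact Filter.Eventually.of_forall fun x => by simp only [Pi.mul_apply, Pi.pow_apply]; ring
  have I2 : Integrable (fun x =>
      (fun y : EuclideanSpace ℝ (Fin n) => (u y)^2 * y i) x * fderiv ℝ w x v) := by
    refine (integrable_mul_u hu hsupp
      (hu.continuous.mul (hcoord.mul ((cw.neg.div_const 2).mul hcoord)))).congr ?_
    refine Filter.Eventually.of_forall fun x => ?_
    dsimp only; rw [hwv x]; simp only [Pi.mul_apply, Pi.pow_apply, Pi.neg_apply]; ring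
  have I1 : Integrable (fun x =>
      fderiv ℝ (fun y : EuclideanSpace ℝ (Fin n) => (u y)^2 * y i) x v * w x) := by
    refine (integrable_mul_u hu hsupp
      (q := fun x => (u x + 2 * fderiv ℝ u x v * x i) * w x)
      ((hu.continuous.add ((continuous_const.mul hDu).mul hcoord)).mul cw)).congr ?_
    refine Filter.Eventually.of_forall fun x => ?_
    dsimp only; rw [hfv x]; ring
  have H := integral_mul_fderiv_eq_neg_fderiv_mul_of_integrable I1 I2 I3 (fun x _ => hFd x) (fun x _ => hWd x)
  simp only [hwv, hfv] at H
  have e : ∀ x : EuclideanSpace ℝ (Fin n),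
      (u x)^2 * x i * (-(w x)/2 * x i)
        = (-(1/2) : ℝ) * ((u x)^2 * (x i)^2 * w x) := fun x => by ring
  simp only [e] at H
  rw [integral_const_mul _ _] at H
  linarith

end Stmt3Aux

open Stmt3Aux

theorem stmt_3 (n : ℕ) (u : EuclideanSpace ℝ (Fin n) → ℝ)
    (hu : ContDiff ℝ (⊤ : ℕ∞) u) (hsupp : HasCompactSupport u) :
    ∫ x, (u x)^2 * ‖x‖^2 * ((4 * Real.pi) ^ (-(n:ℝ)/2) * Real.exp (-‖x‖^2/4))
      ≤ 4 * ∫ x, ((n : ℝ) * (u x)^2 + 4 * ‖gradient u x‖^2) *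
          ((4 * Real.pi) ^ (-(n:ℝ)/2) * Real.exp (-‖x‖^2/4)) := by
  classical
  have wdef : ∀ x : EuclideanSpace ℝ (Fin n),
      (4 * Real.pi) ^ (-(n:ℝ)/2) * Real.exp (-‖x‖^2/4) = w x := fun _ => rfl
  simp only [wdef]
  have hud : Differentiable ℝ u := hu.differentiable (by simp)
  have hnormg : ∀ x, ‖gradient u x‖ = ‖fderiv ℝ u x‖ := by
    intro x
    show ‖(InnerProductSpace.toDual ℝ _).symm (fderiv ℝ u x)‖ = _
    simp
  simp only [hnormg]
  -- continuity facts
  have cw : Continuous (w (n := n)) := w_continuous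
  have cDu : Continuous (fderiv ℝ u) := hu.continuous_fderiv (by simp)
  have cDuA : Continuous (fun x => fderiv ℝ u x x) := cDu.clm_apply continuous_id
  have hcoord : ∀ i : Fin n, Continuous (fun x : EuclideanSpace ℝ (Fin n) => x i) :=
    fun i => (EuclideanSpace.proj (𝕜 := ℝ) i).continuous
  -- integrability facts
  have iA : Integrable (fun x => (u x)^2 * w x) := by
    refine (integrable_mul_u hu hsupp (hu.continuous.mul cw)).congr ?_
    exact Filter.Eventually.of_forall fun x => by simp only [Pi.mul_apply, Pi.pow_apply]; ring
  have iI : Integrable (fun x => (u x)^2 * ‖x‖^2 * w x) := by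
    refine (integrable_mul_u hu hsupp
      (hu.continuous.mul ((continuous_norm.pow 2).mul cw))).congr ?_
    exact Filter.Eventually.of_forall fun x => by simp only [Pi.mul_apply, Pi.pow_apply]; ring
  have iB : Integrable (fun x => u x * fderiv ℝ u x x * w x) := by
    refine (integrable_mul_u hu hsupp (cDuA.mul cw)).congr ?_
    exact Filter.Eventually.of_forall fun x => by simp only [Pi.mul_apply, Pi.pow_apply]; ring
  have iBi : ∀ i : Fin n, Integrable
      (fun x => u x * fderiv ℝ u x (EuclideanSpace.single i 1) * x i * w x) := by
    intro i
    refine (integrable_mul_u hu hsupp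
      (q := fun x => fderiv ℝ u x (EuclideanSpace.single i 1) * x i * w x)
      (((cDu.clm_apply continuous_const).mul (hcoord i)).mul cw)).congr ?_
    exact Filter.Eventually.of_forall fun x => by ring
  have iIi : ∀ i : Fin n, Integrable (fun x => (u x)^2 * (x i)^2 * w x) := by
    intro i
    refine (integrable_mul_u hu hsupp
      (hu.continuous.mul (((hcoord i).pow 2).mul cw))).congr ?_
    exact Filter.Eventually.of_forall fun x => by simp only [Pi.mul_apply, Pi.pow_apply]; ring
  have iC : Integrable (fun x => ‖fderiv ℝ u x‖^2 * w x) := by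
    refine Continuous.integrable_of_hasCompactSupport ((cDu.norm.pow 2).mul cw) ?_
    exact ((hsupp.fderiv (𝕜 := ℝ)).comp_left (g := fun L => ‖L‖^2) (by simp)).mul_right
  -- norms and decompositions
  have hnorm2 : ∀ x : EuclideanSpace ℝ (Fin n), ‖x‖^2 = ∑ i, (x i)^2 := by
    intro x
    rw [EuclideanSpace.norm_eq, Real.sq_sqrt (by positivity)]
    simp [Real.norm_eq_abs, sq_abs]
  have hx_decomp : ∀ x : EuclideanSpace ℝ (Fin n),
      fderiv ℝ u x x = ∑ i, x i * fderiv ℝ u x (EuclideanSpace.single i 1) := by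
    intro x
    have hx : x = ∑ i, x i • EuclideanSpace.single i (1:ℝ) := by
      have h := (EuclideanSpace.basisFun (Fin n) ℝ).sum_repr x
      simp only [EuclideanSpace.basisFun_repr, EuclideanSpace.basisFun_apply] at h
      exact h.symm
    calc fderiv ℝ u x x
        = fderiv ℝ u x (∑ i, x i • EuclideanSpace.single i (1:ℝ)) := by rw [← hx]
      _ = ∑ i, x i * fderiv ℝ u x (EuclideanSpace.single i 1) := by
          rw [map_sum]; simp [smul_eq_mul]
  -- key identity
  have key : ∫ x, (u x)^2 * ‖x‖^2 * w x
      = 2 * n * (∫ x, (u x)^2 * w x) + 4 * ∫ x, u x * fderiv ℝ u x x * w x := by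
    have E1 : ∫ x, (u x)^2 * ‖x‖^2 * w x = ∑ i, ∫ x, (u x)^2 * (x i)^2 * w x := by
      rw [← integral_finset_sum _ (fun i _ => iIi i)]
      refine integral_congr_ae (Filter.Eventually.of_forall fun x => ?_)
      dsimp only; rw [hnorm2 x, Finset.mul_sum, Finset.sum_mul]
    have E2 : ∀ i : Fin n, ∫ x, (u x)^2 * (x i)^2 * w x
        = 2 * (∫ x, (u x)^2 * w x)
          + 4 * ∫ x, u x * fderiv ℝ u x (EuclideanSpace.single i 1) * x i * w x := by
      intro i
      rw [ibp hu hsupp i]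
      have e : ∀ x : EuclideanSpace ℝ (Fin n),
          ((u x)^2 + 2 * u x * fderiv ℝ u x (EuclideanSpace.single i 1) * x i) * w x
            = (u x)^2 * w x
              + 2 * (u x * fderiv ℝ u x (EuclideanSpace.single i 1) * x i * w x) :=
        fun x => by ring
      simp only [e]
      rw [integral_add iA ((iBi i).const_mul 2), integral_const_mul _ _]
      ring
    have E3 : ∑ i, ∫ x, u x * fderiv ℝ u x (EuclideanSpace.single i 1) * x i * w x
        = ∫ x, u x * fderiv ℝ u x x * w x := by
      rw [← integral_finset_sum _ (fun i _ => iBi i)]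
      refine integral_congr_ae (Filter.Eventually.of_forall fun x => ?_)
      dsimp only
      calc ∑ i, u x * fderiv ℝ u x (EuclideanSpace.single i 1) * x i * w x
          = ∑ i, (u x * w x) * (x i * fderiv ℝ u x (EuclideanSpace.single i 1)) :=
            Finset.sum_congr rfl fun i _ => by ring
        _ = (u x * w x) * ∑ i, x i * fderiv ℝ u x (EuclideanSpace.single i 1) :=
            (Finset.mul_sum _ _ _).symm
        _ = u x * fderiv ℝ u x x * w x := by rw [← hx_decomp x]; ring
    rw [E1]
    simp only [E2]
    rw [Finset.sum_add_distrib, Finset.sum_const, ← Finset.mul_sum, E3]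
    simp [nsmul_eq_mul]
    ring
  -- pointwise inequality
  have pw : ∀ x, 4 * (u x * fderiv ℝ u x x * w x)
      ≤ (1/2) * ((u x)^2 * ‖x‖^2 * w x) + 8 * (‖fderiv ℝ u x‖^2 * w x) := by
    intro x
    have hb : |fderiv ℝ u x x| ≤ ‖fderiv ℝ u x‖ * ‖x‖ := by
      have := (fderiv ℝ u x).le_opNorm x
      rwa [Real.norm_eq_abs] at this
    have h0 : u x * fderiv ℝ u x x ≤ |u x| * (‖fderiv ℝ u x‖ * ‖x‖) := by
      calc u x * fderiv ℝ u x x ≤ |u x * fderiv ℝ u x x| := le_abs_self _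
        _ = |u x| * |fderiv ℝ u x x| := abs_mul _ _
        _ ≤ |u x| * (‖fderiv ℝ u x‖ * ‖x‖) := by
            exact mul_le_mul_of_nonneg_left hb (abs_nonneg _)
    have h1 : 4 * (u x * fderiv ℝ u x x)
        ≤ (1/2) * ((u x)^2 * ‖x‖^2) + 8 * ‖fderiv ℝ u x‖^2 := by
      nlinarith [sq_nonneg (|u x| * ‖x‖ - 4 * ‖fderiv ℝ u x‖), sq_abs (u x),
        abs_nonneg (u x), norm_nonneg x, norm_nonneg (fderiv ℝ u x)]
    have h2 := mul_le_mul_of_nonneg_right h1 (w_pos x).le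
    nlinarith [h2]
  -- integral inequality
  have int_ineq : 4 * (∫ x, u x * fderiv ℝ u x x * w x)
      ≤ (1/2) * (∫ x, (u x)^2 * ‖x‖^2 * w x) + 8 * ∫ x, ‖fderiv ℝ u x‖^2 * w x := by
    have := integral_mono (f := fun x => 4 * (u x * fderiv ℝ u x x * w x))
      (g := fun x => (1/2) * ((u x)^2 * ‖x‖^2 * w x) + 8 * (‖fderiv ℝ u x‖^2 * w x))
      (iB.const_mul 4) ((iI.const_mul (1/2)).add (iC.const_mul 8)) pw
    rwa [integral_const_mul _ _, integral_add (iI.const_mul (1/2)) (iC.const_mul 8),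
      integral_const_mul _ _, integral_const_mul _ _] at this
  -- final RHS rewrite
  have rhs : ∫ x, ((n : ℝ) * (u x)^2 + 4 * ‖fderiv ℝ u x‖^2) * w x
      = (n : ℝ) * (∫ x, (u x)^2 * w x) + 4 * ∫ x, ‖fderiv ℝ u x‖^2 * w x := by
    have e : ∀ x : EuclideanSpace ℝ (Fin n),
        ((n : ℝ) * (u x)^2 + 4 * ‖fderiv ℝ u x‖^2) * w x
          = (n : ℝ) * ((u x)^2 * w x) + 4 * (‖fderiv ℝ u x‖^2 * w x) := fun x => by ring
    simp only [e]
    rw [integral_add (iA.const_mul _) (iC.const_mul _), integral_const_mul _ _,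
      integral_const_mul _ _]
  rw [rhs]
  linarith
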